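/- Let L be a BL-chain and x, y, z ∈ L. Then (x ⊗ y) + ((x + y) ⊗ z) = (x + y) ⊗ ((x ⊗ y) + z). -/
import Mathlib


/-- A BL-algebra: a bounded lattice with a commutative monoid operation `mul`
(written ⊗, with unit `⊤` playing the role of 1 and `⊥` the role of 0),
a residuum `imp` (written →), satisfying residuation, divisibility and
prelinearity. -/
class BLAlgebra (L : Type*) extends Lattice L, BoundedOrder L where
  mul : L → L → L
  imp : L → L → L
  mul_comm : ∀ x y : L, mul x y = mul y x
  mul_assoc : ∀ x y z : L, mul (mul x y) z = mul x (mul y z)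
  mul_top : ∀ x : L, mul x ⊤ = x
  residuation : ∀ x y z : L, mul x y ≤ z ↔ x ≤ imp y z
  divisibility : ∀ x y : L, x ⊓ y = mul x (imp x y)
  prelinearity : ∀ x y : L, imp x y ⊔ imp y x = ⊤

namespace BLAlgebra

variable {L : Type*} [BLAlgebra L]

/-- Negation: x̄ := x → 0. -/
def neg (x : L) : L := imp x ⊥

/-- Pseudo-addition: x ⊘ y := x̄ → y. -/
def oslash (x y : L) : L := imp (neg x) y

/-- Addition: x + y := (x ⊘ y) ∧ (y ⊘ x). -/
def add (x y : L) : L := oslash x y ⊓ oslash y x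

end BLAlgebra


namespace BLAlgebra

variable {L : Type*} [BLAlgebra L]

lemma imp_eq_top' {a b : L} (h : a ≤ b) : imp a b = ⊤ := by
  apply le_antisymm le_top
  rw [← residuation, mul_comm, mul_top]
  exact h

lemma mul_le_mul_right' {a b : L} (h : a ≤ b) (x : L) : mul x a ≤ mul x b := by
  rw [mul_comm x a, residuation]
  refine le_trans h ?_
  rw [← residuation, mul_comm]

lemma mul_neg_self (x : L) : mul x (neg x) = ⊥ := by
  have h := divisibility x ⊥
  simp only [inf_bot_eq] at h
  exact h.symm

lemma mul_bot' (x : L) : mul x ⊥ = ⊥ :=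
  le_antisymm (le_trans (mul_le_mul_right' bot_le x) (mul_neg_self x).le) bot_le

lemma top_mul' (x : L) : mul ⊤ x = x := by rw [mul_comm]; exact mul_top x

lemma imp_top_eq (x : L) : imp ⊤ x = x := by
  apply le_antisymm
  · have := (residuation (imp ⊤ x) ⊤ x).mpr le_rfl
    rwa [mul_top] at this
  · exact (residuation x ⊤ x).mp (by rw [mul_top])

lemma le_negneg (x : L) : x ≤ neg (neg x) :=
  (residuation x (neg x) ⊥).mp (le_of_eq (mul_neg_self x))

lemma bot_add (w : L) : add ⊥ w = w := by
  unfold add oslash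
  show imp (neg ⊥) w ⊓ imp (neg w) ⊥ = w
  have hnb : (neg (⊥ : L)) = ⊤ := imp_eq_top' le_rfl
  rw [hnb, imp_top_eq]
  exact inf_eq_left.mpr (le_negneg w)

lemma add_eq_top_of_mul_ne_bot (htot : ∀ x y : L, x ≤ y ∨ y ≤ x)
    {x y : L} (h : mul x y ≠ ⊥) : add x y = ⊤ := by
  have h1 : neg x ≤ y := by
    rcases htot (neg x) y with h1 | h1
    · exact h1
    · exact absurd (le_antisymm (le_trans (mul_le_mul_right' h1 x) (mul_neg_self x).le) bot_le) h
  have h2 : neg y ≤ x := by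
    rcases htot (neg y) x with h2 | h2
    · exact h2
    · refine absurd (le_antisymm ?_ bot_le) h
      rw [mul_comm]
      exact le_trans (mul_le_mul_right' h2 y) (mul_neg_self y).le
  unfold add oslash
  rw [imp_eq_top' h1, imp_eq_top' h2, inf_top_eq]

end BLAlgebra

open BLAlgebra

/-- In a BL-chain, (x ⊗ y) + ((x + y) ⊗ z) = (x + y) ⊗ ((x ⊗ y) + z). -/
theorem mul_add_identity {L : Type*} [BLAlgebra L]
    (htot : ∀ x y : L, x ≤ y ∨ y ≤ x) (x y z : L) :
    add (mul x y) (mul (add x y) z) = mul (add x y) (add (mul x y) z) := by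
  by_cases h : mul x y = ⊥
  · rw [h, bot_add, bot_add]
  · rw [add_eq_top_of_mul_ne_bot htot h, top_mul', top_mul']
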